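/- arXiv:2510.00441 — 3 statements merged into one kernel-verified Lean document; each statement's English description precedes it below -/
import Mathlib

section
/- For exchangeable, almost surely distinct random variables g_1,...,g_{N+1}, the rank of g_{N+1} among all N+1 variables is uniformly distributed on {1,...,N+1}. -/
/-!
By exchangeability, permuting the coordinates by the transposition of `j` and the last index
shows that the rank of the `j`-th variable has the same law as the rank of the last one. On the
conull event where the variables are distinct, the ranks are a bijection onto `{1, …, N + 1}`,
so for each `k` exactly one of the `N + 1` events `{rank of g j = k}` occurs. Their probabilities
are therefore equal and add up to `1`.
-/

open MeasureTheory Finset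
open scoped ENNReal

section Rank

variable {ι α : Type*} [Fintype ι] [LinearOrder α]

def rank (x : ι → α) (j : ι) : ℕ := #{i | x i ≤ x j}

lemma rank_lt_rank {x : ι → α} {j j' : ι} (h : x j < x j') : rank x j < rank x j' := by
  refine card_lt_card ⟨fun i hi => ?_, fun hsub => ?_⟩
  · simp only [mem_filter, mem_univ, true_and] at hi ⊢
    exact hi.trans h.le
  · have hj' : j' ∈ ({i | x i ≤ x j'} : Finset ι) := by simp
    have hle : x j' ≤ x j := by simpa using hsub hj'
    exact (hle.trans_lt h).false

lemma rank_injective {x : ι → α} (hx : Function.Injective x) : Function.Injective (rank x) := by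
  intro j j' h
  by_contra hne
  rcases (hx.ne hne).lt_or_gt with hlt | hlt
  · exact (rank_lt_rank hlt).ne h
  · exact (rank_lt_rank hlt).ne' h

lemma rank_mem_Icc (x : ι → α) (j : ι) : rank x j ∈ Icc 1 (Fintype.card ι) :=
  mem_Icc.2 ⟨card_pos.2 ⟨j, by simp⟩, card_filter_le _ _⟩

lemma image_rank {x : ι → α} (hx : Function.Injective x) :
    univ.image (rank x) = Icc 1 (Fintype.card ι) :=
  eq_of_subset_of_card_le (fun _ hm => by
      obtain ⟨j, -, rfl⟩ := mem_image.1 hm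
      exact rank_mem_Icc x j)
    (by simp [card_image_of_injective _ (rank_injective hx)])

lemma existsUnique_rank_eq {x : ι → α} (hx : Function.Injective x) {k : ℕ}
    (hk : k ∈ Icc 1 (Fintype.card ι)) : ∃! j, rank x j = k := by
  obtain ⟨j, -, hj⟩ := mem_image.1 ((image_rank hx).symm ▸ hk)
  exact ⟨j, hj, fun j' hj' => rank_injective hx (hj'.trans hj.symm)⟩

lemma rank_comp_perm (x : ι → α) (π : Equiv.Perm ι) (j : ι) :
    rank (x ∘ π) j = rank x (π j) := by
  refine card_nbij π (fun i hi => ?_) π.injective.injOn (fun i hi => ⟨π.symm i, ?_, by simp⟩)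
  · simpa using hi
  · simpa using hi

variable [MeasurableSpace α] [TopologicalSpace α] [OpensMeasurableSpace α]
  [OrderClosedTopology α] [SecondCountableTopology α]

lemma measurable_rank (j : ι) : Measurable fun x : ι → α => rank x j := by
  have hrank : (fun x : ι → α => rank x j) = fun x => ∑ i, if x i ≤ x j then 1 else 0 :=
    funext fun x => card_filter _ _
  rw [hrank]
  exact Finset.measurable_sum _ fun i _ =>
    Measurable.ite (measurableSet_le (measurable_pi_apply i) (measurable_pi_apply j))
      measurable_const measurable_const

end Rank

lemma sum_measure_eq_one_of_ae_existsUnique {Ω ι : Type*} [MeasurableSpace Ω] [Fintype ι]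
    {μ : Measure Ω} [IsProbabilityMeasure μ] {A : ι → Set Ω} (hA : ∀ j, MeasurableSet (A j))
    (h : ∀ᵐ ω ∂μ, ∃! j, ω ∈ A j) : ∑ j, μ (A j) = 1 := by
  have hone : ∀ᵐ ω ∂μ, ∑ j, (A j).indicator 1 ω = (1 : ℝ≥0∞) := by
    filter_upwards [h] with ω ⟨j, hj, huniq⟩
    rw [sum_eq_single j (fun j' _ hj' => Set.indicator_of_notMem (fun h => hj' (huniq j' h)) _)
      (by simp)]
    simp [hj]
  calc ∑ j, μ (A j) = ∫⁻ ω, ∑ j, (A j).indicator 1 ω ∂μ := by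
        rw [lintegral_finsetSum _ fun j _ => measurable_one.indicator (hA j)]
        simp_rw [lintegral_indicator_one (hA _)]
    _ = 1 := by rw [lintegral_congr_ae hone, lintegral_one, measure_univ]

section Exchangeable

variable {Ω ι α : Type*} [MeasurableSpace Ω] [MeasurableSpace α]

def Exchangeable (μ : Measure Ω) (X : ι → Ω → α) : Prop :=
  ∀ π : Equiv.Perm ι, μ.map (fun ω i => X (π i) ω) = μ.map (fun ω i => X i ω)

variable {μ : Measure Ω} {X : ι → Ω → α}

lemma Exchangeable.measure_comp_perm_mem (hX : Exchangeable μ X) (hmeas : ∀ i, Measurable (X i))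
    (π : Equiv.Perm ι) {S : Set (ι → α)} (hS : MeasurableSet S) :
    μ {ω | (fun i => X (π i) ω) ∈ S} = μ {ω | (fun i => X i ω) ∈ S} := by
  have h : μ.map (fun ω i => X (π i) ω) S = μ.map (fun ω i => X i ω) S := by rw [hX π]
  rwa [Measure.map_apply (measurable_pi_lambda _ fun i => hmeas _) hS,
    Measure.map_apply (measurable_pi_lambda _ hmeas) hS] at h

variable [Fintype ι] [LinearOrder α] [TopologicalSpace α] [OpensMeasurableSpace α]
  [OrderClosedTopology α] [SecondCountableTopology α]

lemma Exchangeable.measure_rank_eq (hX : Exchangeable μ X) (hmeas : ∀ i, Measurable (X i))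
    (j j' : ι) (k : ℕ) :
    μ {ω | rank (X · ω) j = k} = μ {ω | rank (X · ω) j' = k} := by
  classical
  have h := hX.measure_comp_perm_mem hmeas (Equiv.swap j j')
    (measurable_rank j' (measurableSet_singleton k))
  have hswap : ∀ ω, rank (fun i => X (Equiv.swap j j' i) ω) j' = rank (X · ω) j := fun ω =>
    (rank_comp_perm (X · ω) _ j').trans (congrArg _ (Equiv.swap_apply_right j j'))
  simpa only [Set.mem_preimage, Set.mem_singleton_iff, hswap] using h

lemma Exchangeable.measure_rank_eq_one_div_card [IsProbabilityMeasure μ]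
    (hX : Exchangeable μ X) (hmeas : ∀ i, Measurable (X i))
    (hdist : ∀ᵐ ω ∂μ, Function.Injective fun i => X i ω) (j : ι) {k : ℕ}
    (hk : k ∈ Icc 1 (Fintype.card ι)) :
    μ {ω | rank (X · ω) j = k} = 1 / Fintype.card ι := by
  have hsum : ∑ j', μ {ω | rank (X · ω) j' = k} = 1 :=
    sum_measure_eq_one_of_ae_existsUnique
      (fun j' => measurable_pi_lambda _ hmeas (measurable_rank j' (measurableSet_singleton k)))
      (hdist.mono fun ω hω => existsUnique_rank_eq hω hk)
  have hcard : (Fintype.card ι : ℝ≥0∞) ≠ 0 := by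
    rw [mem_Icc] at hk
    exact_mod_cast (by omega : Fintype.card ι ≠ 0)
  simp_rw [hX.measure_rank_eq hmeas _ j, sum_const, card_univ, nsmul_eq_mul] at hsum
  rw [ENNReal.eq_div_iff hcard (by simp), hsum]

end Exchangeable

/-- for exchangeable, almost surely distinct real random variables
`g 0, ..., g N`, the rank of the last one among all `N + 1` of them (the number of
indices `i` with `g i ≤ g (last)`) is uniform on `{1, ..., N + 1}`. -/
theorem rank_of_last_uniform
    {Ω : Type*} [MeasurableSpace Ω] (μ : Measure Ω) [IsProbabilityMeasure μ]
    (N : ℕ) (g : Fin (N + 1) → Ω → ℝ) (hmeas : ∀ i, Measurable (g i))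
    (hexch : ∀ π : Equiv.Perm (Fin (N + 1)),
      Measure.map (fun ω i => g (π i) ω) μ = Measure.map (fun ω i => g i ω) μ)
    (hdist : ∀ᵐ ω ∂μ, Function.Injective fun i => g i ω) :
    ∀ k ∈ Finset.Icc 1 (N + 1),
      μ {ω | (Finset.univ.filter
          (fun i : Fin (N + 1) => g i ω ≤ g (Fin.last N) ω)).card = k} =
        1 / (N + 1) := by
  intro k hk
  have h := Exchangeable.measure_rank_eq_one_div_card hexch hmeas hdist (Fin.last N)
    (k := k) (by simpa using hk)
  simpa [rank] using h
end

section
/- PICNN output convexity: Define σ_0 = 0 ∈ ℝ^d and σ_{l+1} = ReLU(W_l σ_l + V_l M + b_l) for l = 0,...,L-1, where each W_l (for l ≥ 1) has nonnegative entries, and define g(M) = W_L σ_L + V_L M + b_L with W_L having nonnegative entries and g scalar-valued. Then g : ℝ^m → ℝ is convex in M. -/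
/-- Hidden activations of a PICNN: `σ_0 = 0`, `σ_{l+1} = ReLU(W_l σ_l + V_l M + b_l)`. -/
noncomputable def picnnSigma {d m : ℕ} (W : ℕ → Matrix (Fin d) (Fin d) ℝ)
    (V : ℕ → Matrix (Fin d) (Fin m) ℝ) (b : ℕ → Fin d → ℝ) (M : Fin m → ℝ) :
    ℕ → Fin d → ℝ
  | 0 => 0
  | l + 1 => fun i =>
      max ((W l).mulVec (picnnSigma W V b M l) i + (V l).mulVec M i + b l i) 0

/-!
Each hidden unit `M ↦ σ_l(M)_i` is convex, by induction on `l`: the pre-activation is a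
nonnegative combination of convex functions plus an affine function of `M`, and ReLU is the
maximum with `0`. At `l = 0` no sign condition on `W_0` is needed since it acts on `σ_0 = 0`.
The output is again a nonnegative combination of hidden units plus an affine function.
-/

open Set Matrix

theorem ConvexOn.sum {𝕜 E β ι : Type*} [Semiring 𝕜] [PartialOrder 𝕜] [AddCommMonoid E]
    [AddCommMonoid β] [PartialOrder β] [IsOrderedAddMonoid β] [SMul 𝕜 E] [Module 𝕜 β]
    {s : Set E} (hs : Convex 𝕜 s) (t : Finset ι) {f : ι → E → β}
    (hf : ∀ i ∈ t, ConvexOn 𝕜 s (f i)) : ConvexOn 𝕜 s fun x => ∑ i ∈ t, f i x := by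
  classical
  induction t using Finset.induction_on with
  | empty => simpa using convexOn_const 0 hs
  | insert i t hi ih =>
    simp only [Finset.sum_insert hi]
    exact (hf i (t.mem_insert_self i)).add (ih fun j hj => hf j (Finset.mem_insert_of_mem hj))

theorem convexOn_dotProduct {𝕜 n : Type*} [CommSemiring 𝕜] [PartialOrder 𝕜] [IsOrderedRing 𝕜]
    [Fintype n] (v : n → 𝕜) : ConvexOn 𝕜 univ (v ⬝ᵥ ·) :=
  (dotProductBilin 𝕜 𝕜 v).convexOn convex_univ

theorem ConvexOn.dotProduct_of_nonneg {𝕜 E n : Type*} [CommSemiring 𝕜] [PartialOrder 𝕜]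
    [IsOrderedRing 𝕜] [AddCommMonoid E] [SMul 𝕜 E] [Fintype n] {s : Set E} (hs : Convex 𝕜 s)
    {w : n → 𝕜} (hw : 0 ≤ w) {f : E → n → 𝕜} (hf : ∀ j, ConvexOn 𝕜 s fun x => f x j) :
    ConvexOn 𝕜 s fun x => w ⬝ᵥ f x :=
  ConvexOn.sum hs _ fun j _ => (hf j).smul (hw j)

theorem convexOn_picnnSigma {d m : ℕ} {W : ℕ → Matrix (Fin d) (Fin d) ℝ}
    (V : ℕ → Matrix (Fin d) (Fin m) ℝ) (b : ℕ → Fin d → ℝ)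
    (hW : ∀ l, 1 ≤ l → ∀ i j, 0 ≤ W l i j) (l : ℕ) (i : Fin d) :
    ConvexOn ℝ univ fun M => picnnSigma W V b M l i := by
  induction l generalizing i with
  | zero => exact convexOn_const 0 convex_univ
  | succ l ih =>
    have hhidden : ConvexOn ℝ univ fun M => (W l *ᵥ picnnSigma W V b M l) i := by
      rcases l with _ | l
      · simpa [picnnSigma] using convexOn_const 0 convex_univ
      · exact .dotProduct_of_nonneg convex_univ (hW _ l.succ_pos i) ih
    exact ((hhidden.add (convexOn_dotProduct (V l i))).add_const (b l i)).sup
      (convexOn_const 0 convex_univ)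

/-- the scalar PICNN output `g(M) = W_L σ_L + V_L M + b_L` is convex in `M`
when all the hidden and output weights `W_l` (`l ≥ 1`) are entrywise nonnegative. -/
theorem picnn_output_convex (d m L : ℕ)
    (W : ℕ → Matrix (Fin d) (Fin d) ℝ) (V : ℕ → Matrix (Fin d) (Fin m) ℝ)
    (b : ℕ → Fin d → ℝ)
    (hW : ∀ l, 1 ≤ l → ∀ i j, 0 ≤ W l i j)
    (wL : Fin d → ℝ) (hwL : ∀ i, 0 ≤ wL i) (vL : Fin m → ℝ) (bL : ℝ) :
    ConvexOn ℝ Set.univ fun M : Fin m → ℝ =>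
      (∑ i, wL i * picnnSigma W V b M L i) + (∑ j, vL j * M j) + bL :=
  ((ConvexOn.dotProduct_of_nonneg convex_univ hwL (convexOn_picnnSigma V b hW L)).add
    (convexOn_dotProduct vL)).add_const bL
end

section
/- If each W_l has nonnegative entries (l = 1,...,L), then the relaxation of the PICNN sublevel set is exact: for any (M, s_1,...,s_L) satisfying σ_l-relaxed constraints s_l ≥ 0 and s_{l+1} ≥ W_l s_l + V_l M + b_l and W_L s_L + V_L M + b_L ≤ q, the true PICNN activations σ_l (computed with equality and ReLU) satisfy σ_l ≤ s_l componentwise for all l, and hence g(M) = W_L σ_L + V_L M + b_L ≤ q. -/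
/-!
By induction on `l`, the true activations satisfy `σ_l ≤ s_l`: nonnegative weights make
`σ ↦ W σ` monotone, and `ReLU z` is the least vector that is `≥ 0` and `≥ z`, which `s_{l+1}`
is by the relaxed constraints. Monotonicity of `σ ↦ wL ⬝ᵥ σ` then transfers `hq` to `σ_L`.
-/

open Matrix

theorem Matrix.mulVec_le_mulVec_of_nonneg {m n R : Type*} [Fintype n] [Semiring R]
    [PartialOrder R] [IsOrderedRing R] {A : Matrix m n R} (hA : ∀ i j, 0 ≤ A i j)
    {u v : n → R} (huv : u ≤ v) : A *ᵥ u ≤ A *ᵥ v :=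
  fun i => dotProduct_le_dotProduct_of_nonneg_left huv (hA i)

section picnnSigma

variable {d m : ℕ} {W : ℕ → Matrix (Fin d) (Fin d) ℝ} {V : ℕ → Matrix (Fin d) (Fin m) ℝ}
  {b : ℕ → Fin d → ℝ} {M : Fin m → ℝ}

theorem picnnSigma_zero : picnnSigma W V b M 0 = 0 := rfl

theorem picnnSigma_succ (l : ℕ) (i : Fin d) :
    picnnSigma W V b M (l + 1) i = max ((W l *ᵥ picnnSigma W V b M l) i + (V l *ᵥ M) i + b l i) 0 :=
  rfl

theorem picnnSigma_succ_le {l : ℕ} {s t : Fin d → ℝ}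
    (hWs : W l *ᵥ picnnSigma W V b M l ≤ W l *ᵥ s) (ht : 0 ≤ t)
    (hrelax : ∀ i, (W l *ᵥ s) i + (V l *ᵥ M) i + b l i ≤ t i) :
    picnnSigma W V b M (l + 1) ≤ t := fun i => by
  rw [picnnSigma_succ]
  exact max_le (by linarith [hWs i, hrelax i]) (ht i)

theorem picnnSigma_le_of_relaxed {L : ℕ} (hW : ∀ l, 1 ≤ l → l < L → ∀ i j, 0 ≤ W l i j)
    {s : ℕ → Fin d → ℝ} (hs0 : s 0 = 0) (hpos : ∀ l, 1 ≤ l → l ≤ L → 0 ≤ s l)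
    (hrelax : ∀ l < L, ∀ i, (W l *ᵥ s l) i + (V l *ᵥ M) i + b l i ≤ s (l + 1) i) :
    ∀ l ≤ L, picnnSigma W V b M l ≤ s l := by
  intro l
  induction l with
  | zero => intro _; rw [picnnSigma_zero, hs0]
  | succ l ih =>
    intro hl
    have hlL : l < L := hl
    have hWσ : W l *ᵥ picnnSigma W V b M l ≤ W l *ᵥ s l := by
      rcases l.eq_zero_or_pos with rfl | hl0
      · rw [picnnSigma_zero, hs0]
      · exact mulVec_le_mulVec_of_nonneg (hW l hl0 hlL) (ih hlL.le)
    exact picnnSigma_succ_le hWσ (hpos (l + 1) l.succ_pos hl) (hrelax l hlL)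

end picnnSigma

/-- with nonnegative weights the ReLU relaxation is exact: any point
`(M, s_1, ..., s_L)` of the relaxed polyhedron dominates the true activations
componentwise, hence `g(M) ≤ q`, i.e. the relaxed polyhedron projects exactly onto
the sublevel set. -/
theorem picnn_relaxation_exact (d m L : ℕ)
    (W : ℕ → Matrix (Fin d) (Fin d) ℝ) (V : ℕ → Matrix (Fin d) (Fin m) ℝ)
    (b : ℕ → Fin d → ℝ)
    (hW : ∀ l, 1 ≤ l → l < L → ∀ i j, 0 ≤ W l i j)
    (wL : Fin d → ℝ) (hwL : ∀ i, 0 ≤ wL i) (vL : Fin m → ℝ) (bL : ℝ) (q : ℝ)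
    (M : Fin m → ℝ) (s : ℕ → Fin d → ℝ) (hs0 : s 0 = 0)
    (hpos : ∀ l, 1 ≤ l → l ≤ L → 0 ≤ s l)
    (hrelax : ∀ l < L, ∀ i, (W l).mulVec (s l) i + (V l).mulVec M i + b l i ≤ s (l + 1) i)
    (hq : (∑ i, wL i * s L i) + (∑ j, vL j * M j) + bL ≤ q) :
    (∀ l ≤ L, picnnSigma W V b M l ≤ s l) ∧
    (∑ i, wL i * picnnSigma W V b M L i) + (∑ j, vL j * M j) + bL ≤ q := by
  have hσs := picnnSigma_le_of_relaxed hW hs0 hpos hrelax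
  have hg : wL ⬝ᵥ picnnSigma W V b M L ≤ wL ⬝ᵥ s L :=
    dotProduct_le_dotProduct_of_nonneg_left (hσs L le_rfl) hwL
  refine ⟨hσs, le_trans ?_ hq⟩
  unfold dotProduct at hg
  linarith
end
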